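/- arXiv:1811.10086 — 7 statements merged into one kernel-verified Lean document; each statement's English description precedes it below -/
import Mathlib

section
/- Let d, m be positive integers with m dividing d, and let σ ∈ S_d be a permutation that is a single cycle of length e (fixing all other points) and that preserves a partition of {1,…,d} into blocks of size m. Then either the support of σ is contained in a single block (so e ≤ m), or m divides e. -/
/-- Let `d, m` be positive integers with `m ∣ d`, and let `σ ∈ S_d` be a
single cycle of length `e` preserving a partition of `{1,…,d}` into blocks of size `m`
(given by a block map `B : Fin d → ι` whose fibers all have `m` elements, and a
permutation `π` of the blocks with `B (σ x) = π (B x)`). Then either the support of `σ`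
is contained in a single block (so `e ≤ m`), or `m` divides `e`. -/
theorem stmt0 (d m e : ℕ) (hd : 0 < d) (hm : 0 < m) (hdvd : m ∣ d)
    (σ : Equiv.Perm (Fin d)) (hcyc : σ.IsCycle) (he : σ.support.card = e)
    (ι : Type) [DecidableEq ι] (B : Fin d → ι)
    (hblocks : ∀ b : ι, (Finset.univ.filter (fun x => B x = b)).card = m)
    (π : Equiv.Perm ι) (hpres : ∀ x, B (σ x) = π (B x)) :
    ((∃ b : ι, ∀ x ∈ σ.support, B x = b) ∧ e ≤ m) ∨ m ∣ e := by
  obtain ⟨x, hx, hxall⟩ := id hcyc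
  have hpow : ∀ (k : ℕ) (y : Fin d), B ((σ ^ k) y) = (π ^ k) (B y) := by
    intro k
    induction k with
    | zero => simp
    | succ n ih =>
      intro y
      rw [pow_succ, pow_succ]
      simp only [Equiv.Perm.mul_apply]
      rw [ih, hpres]
  -- every element of the support is a power of σ applied to x
  have horbit : ∀ y ∈ σ.support, ∃ k : ℕ, (σ ^ k) x = y := by
    intro y hy
    rw [Equiv.Perm.mem_support] at hy
    obtain ⟨k, hk⟩ := hcyc.exists_pow_eq hx hy
    exact ⟨k, hk⟩
  set b := B x with hb
  by_cases hfix : π b = b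
  · -- support contained in block b
    have hπk : ∀ k : ℕ, (π ^ k) b = b := by
      intro k
      induction k with
      | zero => simp
      | succ n ih => rw [pow_succ, Equiv.Perm.mul_apply, hfix, ih]
    have hBy : ∀ y ∈ σ.support, B y = b := by
      intro y hy
      obtain ⟨k, hk⟩ := horbit y hy
      rw [← hk, hpow, hπk]
    left
    refine ⟨⟨b, hBy⟩, ?_⟩
    rw [← he, ← hblocks b]
    apply Finset.card_le_card
    intro y hy
    simp only [Finset.mem_filter, Finset.mem_univ, true_and]
    exact hBy y hy
  · -- support is a union of full blocks
    right
    have hnotfix : ∀ y ∈ σ.support, π (B y) ≠ B y := by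
      intro y hy hcontra
      obtain ⟨k, hk⟩ := horbit y hy
      apply hfix
      rw [← hk, hpow] at hcontra
      have : (π ^ k) (π b) = (π ^ k) b := by
        rw [← Equiv.Perm.mul_apply, ← pow_succ, pow_succ', Equiv.Perm.mul_apply, hcontra]
      exact (π ^ k).injective this
    have hfull : ∀ y ∈ σ.support, ∀ z : Fin d, B z = B y → z ∈ σ.support := by
      intro y hy z hz
      by_contra hzs
      rw [Equiv.Perm.notMem_support] at hzs
      apply hnotfix y hy
      rw [← hz, ← hpres, hzs]
    -- count the support fiberwise
    set T := σ.support.image B with hT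
    have hcard := Finset.card_eq_sum_card_fiberwise
      (f := B) (s := σ.support) (t := T) (fun y hy => Finset.mem_image_of_mem B hy)
    have hfib : ∀ c ∈ T, (σ.support.filter (fun y => B y = c)).card = m := by
      intro c hc
      obtain ⟨y, hy, hyc⟩ := Finset.mem_image.mp hc
      rw [← hblocks c]
      congr 1
      ext z
      simp only [Finset.mem_filter, Finset.mem_univ, true_and, and_iff_right_iff_imp]
      intro hz
      exact hfull y hy z (by rw [hz, hyc])
    rw [← he, hcard, Finset.sum_congr rfl hfib, Finset.sum_const, smul_eq_mul]
    exact dvd_mul_left m T.card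
end

section
/- Let d ≥ 2 and let G ≤ S_d be a transitive subgroup containing single cycles of lengths e₁, e₂, e₃ with 2 ≤ e₁ ≤ e₂ ≤ e₃ ≤ d and e₁ + e₂ + e₃ = 2d + 1. Then G is a primitive permutation group. -/
/-!
Let `B` be a block of size `b` with `1 < b < d`, so that `b ∣ d` and `2 * b ≤ d`; the translates of
`B` partition the points. For a cycle `c ∈ G` and a translate `C` meeting its support, either
`c • C = C`, and then `C` contains the whole `c`-orbit, i.e. the support of `c`, or `c • C` is
disjoint from `C`, and then `c` moves every point of `C`. So either the length of `c` is at most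
`b`, or the support of `c` is a union of translates and `b` divides the length.
Since `e₁ + e₂ ≥ d + 1`, the cycles of lengths `e₂, e₃` are longer than `b`, so `b ∣ e₂ + e₃`,
hence `b ∣ 2d - e₂ - e₃ = e₁ - 1`; this excludes both `e₁ ≤ b` and `b ∣ e₁`.
-/

open MulAction Pointwise Equiv

theorem Setoid.IsPartition.dvd_ncard_of_disjoint_or_subset {α : Type*} [Finite α]
    {P : Set (Set α)} (hP : Setoid.IsPartition P) {b : ℕ} (hcard : ∀ t ∈ P, t.ncard = b)
    {s : Set α} (hs : ∀ t ∈ P, Disjoint s t ∨ t ⊆ s) : b ∣ s.ncard := by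
  have : Fintype P := Fintype.ofFinite P
  rw [hP.ncard_eq_finsum s, finsum_eq_sum_of_fintype]
  refine Finset.dvd_sum fun t _ => ?_
  rcases hs t t.2 with hdisj | hsub
  · simp [hdisj.inter_eq]
  · rw [Set.inter_eq_right.2 hsub, hcard t t.2]

theorem MulAction.IsBlock.support_subset_or_subset_support {α : Type*} [Fintype α]
    [DecidableEq α] {G : Subgroup (Perm α)} {C : Set α} (hC : IsBlock G C) {c : Perm α}
    (hc : c ∈ G) (hcyc : c.IsCycle) {x : α} (hxC : x ∈ C) (hx : c x ≠ x) :
    (c.support : Set α) ⊆ C ∨ C ⊆ c.support := by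
  set γ : G := ⟨c, hc⟩
  rcases hC.smul_eq_or_disjoint γ with hfix | hdisj
  · left
    intro y hy
    obtain ⟨i, rfl⟩ := hcyc.exists_zpow_eq hx (Perm.mem_support.1 hy)
    have hi : (γ ^ i) • C = C := zpow_mem (mem_stabilizer_iff.2 hfix) i
    rw [← hi]
    exact Set.smul_mem_smul_set (a := γ ^ i) hxC
  · right
    intro y hyC
    rw [Finset.mem_coe, Perm.mem_support]
    intro hy
    exact Set.disjoint_left.1 hdisj (hy ▸ Set.smul_mem_smul_set (a := γ) hyC) hyC

theorem MulAction.IsBlock.card_support_le_or_dvd {α : Type*} [Fintype α] [DecidableEq α]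
    {G : Subgroup (Perm α)} [IsPretransitive G α] {B : Set α} (hB : IsBlock G B)
    (hBne : B.Nonempty) {c : Perm α} (hc : c ∈ G) (hcyc : c.IsCycle) :
    c.support.card ≤ B.ncard ∨ B.ncard ∣ c.support.card := by
  rw [← Set.ncard_coe_finset]
  by_cases hin : ∃ g : G, (c.support : Set α) ⊆ g • B
  · obtain ⟨g, hg⟩ := hin
    exact .inl ((Set.ncard_le_ncard hg).trans_eq (Set.ncard_smul_set g B))
  · push Not at hin
    refine .inr ((hB.isBlockSystem hBne).1.dvd_ncard_of_disjoint_or_subset ?_ ?_)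
    · rintro _ ⟨g, rfl⟩
      exact Set.ncard_smul_set g B
    · rintro _ ⟨g, rfl⟩
      refine or_iff_not_imp_left.2 fun hmeet => ?_
      obtain ⟨x, hx, hxg⟩ := Set.not_disjoint_iff.1 hmeet
      exact ((hB.translate g).support_subset_or_subset_support hc hcyc hxg
        (Perm.mem_support.1 hx)).resolve_left (hin g)

theorem Nat.eq_one_or_eq_of_le_or_dvd_of_add_eq {b d e₁ e₂ e₃ : ℕ} (hbd : b ∣ d)
    (h1 : 2 ≤ e₁) (h12 : e₁ ≤ e₂) (h23 : e₂ ≤ e₃) (h3d : e₃ ≤ d)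
    (hsum : e₁ + e₂ + e₃ = 2 * d + 1)
    (hb₁ : e₁ ≤ b ∨ b ∣ e₁) (hb₂ : e₂ ≤ b ∨ b ∣ e₂) (hb₃ : e₃ ≤ b ∨ b ∣ e₃) :
    b = 1 ∨ b = d := by
  by_contra! hb
  obtain ⟨k, rfl⟩ := hbd
  have hk : 2 ≤ k := by
    rcases k with _ | _ | k <;> simp_all
  have hb2 : 2 ≤ b := by
    rcases b with _ | _ | b <;> simp_all
  have h2b : 2 * b ≤ b * k := by rw [mul_comm]; exact Nat.mul_le_mul_left b hk
  have h₂ : b ∣ e₂ := hb₂.resolve_left (by omega)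
  have h₃ : b ∣ e₃ := hb₃.resolve_left (by omega)
  have h₁ : b ∣ e₁ - 1 := by
    have : e₁ - 1 = 2 * (b * k) - (e₂ + e₃) := by omega
    rw [this]
    exact Nat.dvd_sub (dvd_mul_of_dvd_right (dvd_mul_right b k) 2) (dvd_add h₂ h₃)
  rcases hb₁ with hle | hdvd
  · exact absurd (Nat.le_of_dvd (by omega) h₁) (by omega)
  · have : b ∣ 1 := by simpa [Nat.sub_sub_self (by omega : 1 ≤ e₁)] using Nat.dvd_sub hdvd h₁
    exact absurd (Nat.le_of_dvd one_pos this) (by omega)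

theorem stmt1_general (d : ℕ) (G : Subgroup (Equiv.Perm (Fin d)))
    (htrans : MulAction.IsPretransitive G (Fin d))
    (e₁ e₂ e₃ : ℕ) (h1 : 2 ≤ e₁) (h12 : e₁ ≤ e₂) (h23 : e₂ ≤ e₃) (h3d : e₃ ≤ d)
    (hsum : e₁ + e₂ + e₃ = 2 * d + 1)
    (hg₁ : ∃ g ∈ G, g.IsCycle ∧ g.support.card = e₁)
    (hg₂ : ∃ g ∈ G, g.IsCycle ∧ g.support.card = e₂)
    (hg₃ : ∃ g ∈ G, g.IsCycle ∧ g.support.card = e₃) :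
    ∀ B : Set (Fin d), MulAction.IsBlock G B → B.Subsingleton ∨ B = Set.univ := by
  intro B hB
  rcases B.eq_empty_or_nonempty with rfl | hBne
  · exact .inl Set.subsingleton_empty
  have hcycle {e : ℕ} (hg : ∃ g ∈ G, g.IsCycle ∧ g.support.card = e) :
      e ≤ B.ncard ∨ B.ncard ∣ e := by
    obtain ⟨g, hgG, hcyc, rfl⟩ := hg
    exact hB.card_support_le_or_dvd hBne hgG hcyc
  have hdvd : B.ncard ∣ d := by simpa using hB.ncard_dvd_card hBne
  rcases Nat.eq_one_or_eq_of_le_or_dvd_of_add_eq hdvd h1 h12 h23 h3d hsum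
    (hcycle hg₁) (hcycle hg₂) (hcycle hg₃) with hone | hall
  · exact .inl (Set.ncard_le_one_iff_subsingleton.1 hone.le)
  · exact .inr ((Set.eq_univ_iff_ncard B).2 (by simpa using hall))

/-- Let `d ≥ 2` and let `G ≤ S_d` be a transitive subgroup containing single
cycles of lengths `e₁ ≤ e₂ ≤ e₃` with `2 ≤ e₁`, `e₃ ≤ d` and `e₁ + e₂ + e₃ = 2d + 1`.
Then `G` is a primitive permutation group: every block for the action of `G` on the `d`
points is trivial (a subsingleton or the whole set). -/
theorem stmt1 (d : ℕ) (hd : 2 ≤ d) (G : Subgroup (Equiv.Perm (Fin d)))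
    (htrans : MulAction.IsPretransitive G (Fin d))
    (e₁ e₂ e₃ : ℕ) (h1 : 2 ≤ e₁) (h12 : e₁ ≤ e₂) (h23 : e₂ ≤ e₃) (h3d : e₃ ≤ d)
    (hsum : e₁ + e₂ + e₃ = 2 * d + 1)
    (hg₁ : ∃ g ∈ G, g.IsCycle ∧ g.support.card = e₁)
    (hg₂ : ∃ g ∈ G, g.IsCycle ∧ g.support.card = e₂)
    (hg₃ : ∃ g ∈ G, g.IsCycle ∧ g.support.card = e₃) :
    ∀ B : Set (Fin d), MulAction.IsBlock G B → B.Subsingleton ∨ B = Set.univ :=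
  stmt1_general d G htrans e₁ e₂ e₃ h1 h12 h23 h3d hsum hg₁ hg₂ hg₃
end

section
/- Let d ≥ 2. Define a sequence of groups by E₁ = S_d and, for n ≥ 2, E_n = ker(sgn₂) ∩ (E_{n−1} ≀ E₁) inside Aut(T_n) = Aut(T_{n−1}) ≀ S_d, where sgn₂ is the wreath-product sign composed with the projection to level 2. Then |E_{n}| = |E_{n-1}|^d · d!/2 for all n ≥ 2, and consequently the index of E_n in Aut(T_n) equals 2^{d^{n−2} + d^{n−3} + ⋯ + d + 1} = 2^{(d^{n−1}−1)/(d−1)} for all n ≥ 2. -/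
/-- `TreeAut d n` is the automorphism group of the regular `d`-ary rooted tree of depth
`n+1`, presented via the iterated wreath decomposition
`Aut(T_{n+1}) = Aut(T_n) ≀ S_d`: an automorphism of `T_{n+1}` is a `d`-tuple of
automorphisms of the subtrees `T_n` together with a permutation of level 1. -/
def TreeAut (d : ℕ) : ℕ → Type
  | 0 => Equiv.Perm (Fin d)
  | (n+1) => (Fin d → TreeAut d n) × Equiv.Perm (Fin d)

/-- Restriction of a tree automorphism to level 1 (the projection `π₁`). -/
def topPerm (d : ℕ) : (n : ℕ) → TreeAut d n → Equiv.Perm (Fin d)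
  | 0, w => w
  | (_ + 1), w => w.2

/-- The wreath-product sign `sgn₂`, i.e. the sign homomorphism on `Aut(T₂) = S_d ≀ S_d`,
`sgn₂((σ₁,…,σ_d), τ) = sgn(τ)·∏ᵢ sgn(σᵢ)`, composed with the restriction
`π₂ : Aut(T_{n+2}) → Aut(T₂)` to the first two levels. -/
def sgn2 (d n : ℕ) (w : TreeAut d (n + 1)) : ℤˣ :=
  Equiv.Perm.sign w.2 * ∏ i, Equiv.Perm.sign (topPerm d n (w.1 i))

/-- The subgroup(-set) `E_n ⊆ Aut(T_n)` (here at depth `n+1`): `E₁` is all of `S_d`, and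
`E_{n} = (E_{n-1} ≀ E₁) ∩ ker(sgn₂)`. -/
def Esub (d : ℕ) : (n : ℕ) → Set (TreeAut d n)
  | 0 => Set.univ
  | (n+1) => {w | (∀ i, w.1 i ∈ Esub d n) ∧ sgn2 d n w = 1}

instance TreeAut.finite (d n : ℕ) : Finite (TreeAut d n) := by
  induction n with
  | zero => exact inferInstanceAs (Finite (Equiv.Perm (Fin d)))
  | succ n ih => exact inferInstanceAs (Finite ((Fin d → TreeAut d n) × Equiv.Perm (Fin d)))

lemma units_int_mul_self (u : ℤˣ) : u * u = 1 := by
  rcases Int.units_eq_one_or u with h | h <;> simp [h]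

lemma card_esub_succ (d : ℕ) (hd : 2 ≤ d) (n : ℕ) :
    Nat.card (Esub d (n+1)) = Nat.card (Esub d n) ^ d * (d.factorial / 2) := by
  classical
  set A := TreeAut d n with hA
  let ε : (Fin d → A) → ℤˣ := fun f => ∏ i, Equiv.Perm.sign (topPerm d n (f i))
  let a : Fin d := ⟨0, by omega⟩
  let b : Fin d := ⟨1, by omega⟩
  have hab : a ≠ b := by simp [a, b, Fin.ext_iff]
  let σ : ℤˣ → Equiv.Perm (Fin d) := fun u => if u = 1 then 1 else Equiv.swap a b
  have hσ : ∀ u, Equiv.Perm.sign (σ u) = u := by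
    intro u
    rcases Int.units_eq_one_or u with h | h <;>
      simp [σ, h, Equiv.Perm.sign_swap hab]
  let e : ↥(Esub d (n+1)) ≃
      ((∀ i : Fin d, ↥(Esub d n)) × {τ : Equiv.Perm (Fin d) // Equiv.Perm.sign τ = 1}) :=
  { toFun := fun w => (fun i => ⟨w.1.1 i, w.2.1 i⟩,
      ⟨(σ (ε w.1.1))⁻¹ * w.1.2, by
        have h' : Equiv.Perm.sign w.1.2 * ε w.1.1 = 1 := w.2.2
        have hs : Equiv.Perm.sign w.1.2 = ε w.1.1 := by
          calc Equiv.Perm.sign w.1.2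
              = Equiv.Perm.sign w.1.2 * (ε w.1.1 * ε w.1.1) := by
                rw [units_int_mul_self, mul_one]
            _ = (Equiv.Perm.sign w.1.2 * ε w.1.1) * ε w.1.1 := (mul_assoc _ _ _).symm
            _ = ε w.1.1 := by rw [h', one_mul]
        rw [map_mul, map_inv, hσ, hs]
        exact inv_mul_cancel _⟩)
    invFun := fun p => ⟨(fun i => (p.1 i : A), σ (ε fun i => (p.1 i : A)) * p.2),
      ⟨fun i => (p.1 i).2, by
        show Equiv.Perm.sign _ * ε _ = 1
        rw [map_mul, hσ, p.2.2, mul_one]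
        exact units_int_mul_self _⟩⟩
    left_inv := fun w => by
      obtain ⟨⟨f, τ⟩, hw⟩ := w
      apply Subtype.ext
      show (f, σ (ε f) * ((σ (ε f))⁻¹ * τ)) = (f, τ)
      rw [mul_inv_cancel_left]
    right_inv := fun p => by
      obtain ⟨g, α⟩ := p
      refine Prod.ext rfl ?_
      apply Subtype.ext
      show (σ (ε fun i => (g i : A)))⁻¹ * (σ (ε fun i => (g i : A)) * (α : Equiv.Perm (Fin d)))
          = (α : Equiv.Perm (Fin d))
      rw [inv_mul_cancel_left] }
  rw [Nat.card_congr e, Nat.card_prod, Nat.card_pi, Finset.prod_const, Finset.card_univ,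
    Fintype.card_fin]
  congr 1
  have h1 : {τ : Equiv.Perm (Fin d) // Equiv.Perm.sign τ = 1} =
      ↥(alternatingGroup (Fin d)) := rfl
  have : Nontrivial (Fin d) := Fin.nontrivial_iff_two_le.mpr hd
  have h2 := two_mul_card_alternatingGroup (α := Fin d)
  rw [Fintype.card_perm, Fintype.card_fin] at h2
  rw [h1, Nat.card_eq_fintype_card]
  omega

lemma card_treeAut_zero (d : ℕ) : Nat.card (TreeAut d 0) = d.factorial := by
  show Nat.card (Equiv.Perm (Fin d)) = _
  rw [Nat.card_eq_fintype_card, Fintype.card_perm, Fintype.card_fin]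

lemma card_esub_zero (d : ℕ) : Nat.card (Esub d 0) = d.factorial := by
  have : Nat.card (Esub d 0) = Nat.card (TreeAut d 0) :=
    Nat.card_congr (Equiv.Set.univ (TreeAut d 0))
  rw [this, card_treeAut_zero]

lemma card_treeAut_succ (d n : ℕ) :
    Nat.card (TreeAut d (n+1)) = Nat.card (TreeAut d n) ^ d * d.factorial := by
  have h : Nat.card (TreeAut d (n+1)) =
      Nat.card ((Fin d → TreeAut d n) × Equiv.Perm (Fin d)) := rfl
  rw [h, Nat.card_prod, Nat.card_fun, Nat.card_eq_fintype_card (α := Equiv.Perm (Fin d)),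
    Fintype.card_perm, Fintype.card_fin, Nat.card_eq_fintype_card (α := Fin d), Fintype.card_fin]

lemma sum_pow_succ (d n : ℕ) :
    ∑ k ∈ Finset.range (n+1), d ^ k = (∑ k ∈ Finset.range n, d ^ k) * d + 1 := by
  rw [Finset.sum_range_succ']
  simp [pow_succ, ← Finset.sum_mul]


/-- For `d ≥ 2` and every depth `n + 1 ≥ 2` (so `n ≥ 1`), one has
`|E_n| = |E_{n−1}|^d · d!/2`, and the index of `E_n` in `Aut(T_n)` equals
`2^{d^{n−2} + ⋯ + d + 1}`, the exponent being the geometric sum `∑_{k<n} d^k`,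
which equals `(d^{n}−1)/(d−1)` (in the paper's level-numbering, `n` here is `n−1`). -/
theorem stmt5 (d : ℕ) (hd : 2 ≤ d) (n : ℕ) (hn : 1 ≤ n) :
    Nat.card (Esub d n) = Nat.card (Esub d (n - 1)) ^ d * (d.factorial / 2) ∧
    Nat.card (TreeAut d n) = 2 ^ (∑ k ∈ Finset.range n, d ^ k) * Nat.card (Esub d n) ∧
    (∑ k ∈ Finset.range n, d ^ k) = (d ^ n - 1) / (d - 1) := by

  obtain ⟨m, rfl⟩ : ∃ m, n = m + 1 := ⟨n - 1, by omega⟩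
  have h2 : 2 * (d.factorial / 2) = d.factorial :=
    Nat.mul_div_cancel' (Nat.dvd_factorial two_pos hd)
  refine ⟨card_esub_succ d hd m, ?_, Nat.geomSum_eq hd _⟩
  clear hn
  generalize hq : d.factorial / 2 = q at h2 ⊢
  induction m with
  | zero =>
      rw [card_treeAut_succ, card_esub_succ d hd 0, card_treeAut_zero, card_esub_zero,
        Finset.sum_range_one, pow_zero, pow_one, hq, ← h2]
      ring
  | succ k ih =>
      rw [card_treeAut_succ, ih, card_esub_succ d hd (k+1), sum_pow_succ d (k+1), hq, ← h2]
      ring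
end

section
/- Let d ≥ 2 and let e₁, e₂, e₃ be integers with 2 ≤ e₁ ≤ e₂ ≤ e₃ ≤ d and e₁ + e₂ + e₃ = 2d + 1. Define permutations of {1,…,d}: g₁ the cycle (d, d−1, …, e₃, 1, 2, …, d−e₂) [a single cycle of length e₁], g₂ the cycle (d−e₂+1, d−e₂+2, …, d) [a single cycle of length e₂], and g₃ the cycle (e₃, e₃−1, …, 2, 1) [a single cycle of length e₃]. Then g₁·g₂·g₃ = 1 in S_d, and the subgroup ⟨g₁, g₂, g₃⟩ acts transitively on {1,…,d}. -/
/-! Each of the three cycles acts on `{1,…,d}` as a shift by `±1` along an interval, except at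
one wrap-around point, so `g₃ ∘ g₂ ∘ g₁` can be evaluated piece by piece: with `k = d - e₂`,
`g₁` shifts `(e₃, d]` down and `[1, k)` up, `g₂` shifts `(k, d)` up, `g₃` shifts `[2, e₃]`
down, and `e₁ ≤ e₂ ≤ e₃ ≤ d` gives `k < e₃`, so these shifts cancel. For transitivity, powers
of `g₃` bring every point of `[1, e₃]` to `1`, and a point above `e₃` is first carried by `g₂`
to `d` and then to `k + 1 ≤ e₃`. -/

open Set

namespace List

variable {α : Type*}

theorem map_range_append_map_range (f g : ℕ → α) (a b : ℕ) :
    (range a).map f ++ (range b).map g =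
      (range (a + b)).map fun i => if i < a then f i else g (i - a) := by
  rw [range_add, map_append, map_map]
  congr 1
  · exact map_congr_left fun i hi => by simp [mem_range.1 hi]
  · exact map_congr_left fun i _ => by simp

theorem nodup_map_range {f : ℕ → α} {n : ℕ} (hf : InjOn f (Iio n)) : ((range n).map f).Nodup :=
  Nodup.map_on (fun _ ha _ hb => hf (mem_range.1 ha) (mem_range.1 hb)) nodup_range

variable [DecidableEq α] {f : ℕ → α} {n i : ℕ} {x y : α}

theorem formPerm_map_range_of_succ_lt (hf : InjOn f (Iio n)) (hi : i + 1 < n)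
    (hx : f i = x) (hy : f (i + 1) = y) : ((range n).map f).formPerm x = y := by
  subst hx hy
  have := formPerm_apply_lt_getElem _ (nodup_map_range hf) i (by simpa using hi)
  simp only [getElem_map, getElem_range] at this
  exact this

theorem formPerm_map_range_of_pred (hf : InjOn f (Iio n)) (hn : 0 < n)
    (hx : f (n - 1) = x) (hy : f 0 = y) : ((range n).map f).formPerm x = y := by
  subst hx hy
  have := formPerm_apply_getElem _ (nodup_map_range hf) (n - 1) (by simpa using hn)
  simpa [Nat.sub_add_cancel hn] using this

theorem formPerm_map_range_of_forall_ne (hx : ∀ i < n, f i ≠ x) :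
    ((range n).map f).formPerm x = x :=
  formPerm_apply_of_notMem (by simpa using hx)

end List

/-- The cycle `(e, e-1, …, 1)`. -/
def descCycle (e : ℕ) : Equiv.Perm ℕ :=
  ((List.range e).map fun j => e - j).formPerm

/-- The cycle `(a, a+1, …, a+n-1)`. -/
def ascCycle (a n : ℕ) : Equiv.Perm ℕ :=
  ((List.range n).map fun j => a + j).formPerm

/-- The cycle `(d, d-1, …, d-m, 1, 2, …, k)`. -/
def wrapCycle (d m k : ℕ) : Equiv.Perm ℕ :=
  ((List.range (m + 1)).map (fun j => d - j) ++ (List.range k).map (· + 1)).formPerm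

section Cycles

variable {a n e d m k j x : ℕ}

theorem injOn_descCycle_map (e : ℕ) : InjOn (fun j => e - j) (Iio e) := by
  intro i hi j hj h
  simp only [mem_Iio] at hi hj h
  omega

theorem descCycle_apply_of_two_le (h₂ : 2 ≤ x) (hx : x ≤ e) : descCycle e x = x - 1 :=
  List.formPerm_map_range_of_succ_lt (i := e - x) (injOn_descCycle_map e) (by omega)
    (by omega) (by omega)

theorem descCycle_apply_one (he : 0 < e) : descCycle e 1 = e :=
  List.formPerm_map_range_of_pred (injOn_descCycle_map e) he (by omega) (by omega)

theorem descCycle_apply_of_lt (hx : e < x) : descCycle e x = x :=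
  List.formPerm_map_range_of_forall_ne fun i _ => by omega

theorem descCycle_apply_zero : descCycle e 0 = 0 :=
  List.formPerm_map_range_of_forall_ne fun i hi => by omega

theorem descCycle_pow_apply (hj : j < x) (hx : x ≤ e) : (descCycle e ^ j) x = x - j := by
  induction j generalizing x with
  | zero => rfl
  | succ j ih =>
    rw [pow_succ, Equiv.Perm.mul_apply, descCycle_apply_of_two_le (by omega) hx,
      ih (by omega) (by omega)]
    omega

theorem injOn_ascCycle_map (a n : ℕ) : InjOn (fun j => a + j) (Iio n) :=
  fun _ _ _ _ h => by simpa using h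

theorem ascCycle_apply_of_lt (ha : a ≤ x) (hx : x + 1 < a + n) : ascCycle a n x = x + 1 :=
  List.formPerm_map_range_of_succ_lt (i := x - a) (injOn_ascCycle_map a n) (by omega)
    (by omega) (by omega)

theorem ascCycle_apply_of_succ_eq (hn : 0 < n) (hx : x + 1 = a + n) : ascCycle a n x = a :=
  List.formPerm_map_range_of_pred (injOn_ascCycle_map a n) hn (by omega) (by omega)

theorem ascCycle_apply_of_lt_left (hx : x < a) : ascCycle a n x = x :=
  List.formPerm_map_range_of_forall_ne fun i _ => by omega

theorem ascCycle_apply_of_le_right (hx : a + n ≤ x) : ascCycle a n x = x :=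
  List.formPerm_map_range_of_forall_ne fun i hi => by omega

theorem ascCycle_pow_apply (ha : a ≤ x) (hx : x + j < a + n) : (ascCycle a n ^ j) x = x + j := by
  induction j generalizing x with
  | zero => rfl
  | succ j ih =>
    rw [pow_succ, Equiv.Perm.mul_apply, ascCycle_apply_of_lt ha (by omega),
      ih (by omega) (by omega)]
    omega

theorem wrapCycle_eq (d m k : ℕ) :
    wrapCycle d m k =
      ((List.range (m + 1 + k)).map
        fun i => if i < m + 1 then d - i else i - (m + 1) + 1).formPerm := by
  rw [wrapCycle, List.map_range_append_map_range]

theorem injOn_wrapCycle_map (hkm : k + m < d) :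
    InjOn (fun i => if i < m + 1 then d - i else i - (m + 1) + 1) (Iio (m + 1 + k)) := by
  intro i hi j hj h
  simp only [mem_Iio] at hi hj
  dsimp only at h
  split_ifs at h <;> omega

theorem wrapCycle_apply_of_lt_of_le (hkm : k + m < d) (h₁ : d - m < x) (h₂ : x ≤ d) :
    wrapCycle d m k x = x - 1 := by
  rw [wrapCycle_eq]
  exact List.formPerm_map_range_of_succ_lt (i := d - x) (injOn_wrapCycle_map hkm) (by omega)
    (by split_ifs <;> omega) (by split_ifs <;> omega)

theorem wrapCycle_apply_of_add_eq (hkm : k + m < d) (hk : 0 < k) (hx : x + m = d) :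
    wrapCycle d m k x = 1 := by
  rw [wrapCycle_eq]
  exact List.formPerm_map_range_of_succ_lt (i := m) (injOn_wrapCycle_map hkm) (by omega)
    (by split_ifs <;> omega) (by split_ifs <;> omega)

theorem wrapCycle_zero_apply_of_add_eq (hm : m < d) (hx : x + m = d) : wrapCycle d m 0 x = d := by
  rw [wrapCycle_eq]
  exact List.formPerm_map_range_of_pred (injOn_wrapCycle_map (by omega)) (by omega)
    (by split_ifs <;> omega) (by split_ifs <;> omega)

theorem wrapCycle_apply_of_pos_of_lt (hkm : k + m < d) (h₁ : 0 < x) (h₂ : x < k) :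
    wrapCycle d m k x = x + 1 := by
  rw [wrapCycle_eq]
  exact List.formPerm_map_range_of_succ_lt (i := m + x) (injOn_wrapCycle_map hkm) (by omega)
    (by split_ifs <;> omega) (by split_ifs <;> omega)

theorem wrapCycle_apply_self (hkm : k + m < d) (hk : 0 < k) : wrapCycle d m k k = d := by
  rw [wrapCycle_eq]
  exact List.formPerm_map_range_of_pred (injOn_wrapCycle_map hkm) (by omega)
    (by split_ifs <;> omega) (by split_ifs <;> omega)

theorem wrapCycle_apply_eq_self (hkm : k + m < d) (hx : x = 0 ∨ k < x ∧ x < d - m ∨ d < x) :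
    wrapCycle d m k x = x := by
  rw [wrapCycle_eq]
  exact List.formPerm_map_range_of_forall_ne fun i _ => by split_ifs <;> omega

end Cycles

theorem Subgroup.exists_apply_eq_of_forall_exists_apply_eq {α : Type*}
    {H : Subgroup (Equiv.Perm α)} {s : Set α} {a : α} (h : ∀ x ∈ s, ∃ g ∈ H, g x = a)
    {x y : α} (hx : x ∈ s) (hy : y ∈ s) :
    ∃ g ∈ H, g x = y := by
  obtain ⟨g, hg, hgx⟩ := h x hx
  obtain ⟨g', hg', hg'y⟩ := h y hy
  refine ⟨g'⁻¹ * g, mul_mem (inv_mem hg') hg, ?_⟩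
  rw [Equiv.Perm.mul_apply, hgx]
  exact Equiv.Perm.inv_eq_iff_eq.2 hg'y.symm

theorem descCycle_ascCycle_wrapCycle_apply {d e₂ e₃ : ℕ} (he₂ : e₂ ≤ d) (he₃ : e₃ ≤ d)
    (h : d < e₂ + e₃) (x : ℕ) :
    descCycle e₃ (ascCycle (d - e₂ + 1) e₂ (wrapCycle d (d - e₃) (d - e₂) x)) = x := by
  have hkm : d - e₂ + (d - e₃) < d := by omega
  rcases Nat.eq_zero_or_pos x with rfl | hx₀
  · rw [wrapCycle_apply_eq_self hkm (by omega), ascCycle_apply_of_lt_left (by omega),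
      descCycle_apply_zero]
  rcases Nat.lt_or_ge d x with hdx | hxd
  · rw [wrapCycle_apply_eq_self hkm (by omega), ascCycle_apply_of_le_right (by omega),
      descCycle_apply_of_lt (by omega)]
  rcases Nat.lt_or_ge e₃ x with h₃x | hx₃
  · rw [wrapCycle_apply_of_lt_of_le hkm (by omega) hxd, ascCycle_apply_of_lt (by omega) (by omega),
      Nat.sub_add_cancel (by omega), descCycle_apply_of_lt h₃x]
  rcases hx₃.eq_or_lt with rfl | hx₃
  · rcases Nat.eq_zero_or_pos (d - e₂) with hk | hk
    · rw [hk, wrapCycle_zero_apply_of_add_eq (by omega) (by omega),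
        ascCycle_apply_of_succ_eq (by omega) (by omega), descCycle_apply_one (by omega)]
    · rw [wrapCycle_apply_of_add_eq hkm hk (by omega), ascCycle_apply_of_lt_left (by omega),
        descCycle_apply_one (by omega)]
  rcases Nat.lt_or_ge (d - e₂) x with hkx | hxk
  · rw [wrapCycle_apply_eq_self hkm (by omega), ascCycle_apply_of_lt (by omega) (by omega),
      descCycle_apply_of_two_le (by omega) (by omega), Nat.add_sub_cancel]
  rcases hxk.eq_or_lt with rfl | hxk
  · rw [wrapCycle_apply_self hkm hx₀, ascCycle_apply_of_succ_eq (by omega) (by omega),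
      descCycle_apply_of_two_le (by omega) (by omega), Nat.add_sub_cancel]
  · rw [wrapCycle_apply_of_pos_of_lt hkm hx₀ hxk, ascCycle_apply_of_lt_left (by omega),
      descCycle_apply_of_two_le (by omega) (by omega), Nat.add_sub_cancel]

theorem exists_apply_eq_one_of_ascCycle_mem_of_descCycle_mem {d e₂ e₃ : ℕ} (he₂ : e₂ ≤ d)
    (h : d < e₂ + e₃) {H : Subgroup (Equiv.Perm ℕ)} (h₂ : ascCycle (d - e₂ + 1) e₂ ∈ H)
    (h₃ : descCycle e₃ ∈ H) {x : ℕ} (hx₀ : 0 < x) (hxd : x ≤ d) :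
    ∃ g ∈ H, g x = 1 := by
  rcases le_or_gt x e₃ with hx₃ | h₃x
  · exact ⟨descCycle e₃ ^ (x - 1), pow_mem h₃ _, by rw [descCycle_pow_apply (by omega) hx₃]; omega⟩
  · refine ⟨descCycle e₃ ^ (d - e₂) * ascCycle (d - e₂ + 1) e₂ ^ (d - x + 1),
      mul_mem (pow_mem h₃ _) (pow_mem h₂ _), ?_⟩
    rw [Equiv.Perm.mul_apply, pow_succ', Equiv.Perm.mul_apply,
      ascCycle_pow_apply (by omega) (by omega), ascCycle_apply_of_succ_eq (by omega) (by omega),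
      descCycle_pow_apply (by omega) (by omega)]
    omega

theorem stmt6_general (d e₁ e₂ e₃ : ℕ)
    (h12 : e₁ ≤ e₂) (h23 : e₂ ≤ e₃) (h3d : e₃ ≤ d)
    (hsum : e₁ + e₂ + e₃ = 2 * d + 1)
    (g₁ g₂ g₃ : Equiv.Perm ℕ)
    (hg₁ : g₁ = (((List.range (d - e₃ + 1)).map (fun j => d - j)) ++
        (List.range (d - e₂)).map (· + 1)).formPerm)
    (hg₂ : g₂ = ((List.range e₂).map (fun j => d - e₂ + 1 + j)).formPerm)
    (hg₃ : g₃ = ((List.range e₃).map (fun j => e₃ - j)).formPerm) :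
    (∀ x, g₃ (g₂ (g₁ x)) = x) ∧
    (∀ x ∈ Finset.Icc 1 d, ∀ y ∈ Finset.Icc 1 d,
      ∃ g ∈ Subgroup.closure {g₁, g₂, g₃}, g x = y) := by
  replace hg₁ : g₁ = wrapCycle d (d - e₃) (d - e₂) := hg₁
  replace hg₂ : g₂ = ascCycle (d - e₂ + 1) e₂ := hg₂
  replace hg₃ : g₃ = descCycle e₃ := hg₃
  subst hg₁ hg₂ hg₃
  have he₂ : e₂ ≤ d := h23.trans h3d
  have h : d < e₂ + e₃ := by omega
  refine ⟨descCycle_ascCycle_wrapCycle_apply he₂ h3d h, fun x hx y hy => ?_⟩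
  refine Subgroup.exists_apply_eq_of_forall_exists_apply_eq (s := Finset.Icc 1 d) (a := 1)
    (fun z hz => ?_) hx hy
  rw [Finset.coe_Icc, Set.mem_Icc] at hz
  exact exists_apply_eq_one_of_ascCycle_mem_of_descCycle_mem he₂ h
    (Subgroup.subset_closure (by simp)) (Subgroup.subset_closure (by simp)) hz.1 hz.2

/-- Let `d ≥ 2` and `2 ≤ e₁ ≤ e₂ ≤ e₃ ≤ d` with `e₁ + e₂ + e₃ = 2d + 1`.
The permutations of `{1,…,d}` (inside `Equiv.Perm ℕ`) given in cycle notation by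
`g₁ = (d, d−1, …, e₃, 1, 2, …, d−e₂)`, `g₂ = (d−e₂+1, …, d)` and `g₃ = (e₃, e₃−1, …, 1)`
satisfy `g₁·g₂·g₃ = 1` (product = composition, permutations acting on the right, i.e.
applying `g₁`, then `g₂`, then `g₃`, is the identity), and `⟨g₁, g₂, g₃⟩` acts
transitively on `{1,…,d}`. -/
theorem stmt6 (d e₁ e₂ e₃ : ℕ) (hd : 2 ≤ d)
    (h1 : 2 ≤ e₁) (h12 : e₁ ≤ e₂) (h23 : e₂ ≤ e₃) (h3d : e₃ ≤ d)
    (hsum : e₁ + e₂ + e₃ = 2 * d + 1)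
    (g₁ g₂ g₃ : Equiv.Perm ℕ)
    (hg₁ : g₁ = (((List.range (d - e₃ + 1)).map (fun j => d - j)) ++
        (List.range (d - e₂)).map (· + 1)).formPerm)
    (hg₂ : g₂ = ((List.range e₂).map (fun j => d - e₂ + 1 + j)).formPerm)
    (hg₃ : g₃ = ((List.range e₃).map (fun j => e₃ - j)).formPerm) :
    (∀ x, g₃ (g₂ (g₁ x)) = x) ∧
    (∀ x ∈ Finset.Icc 1 d, ∀ y ∈ Finset.Icc 1 d,
      ∃ g ∈ Subgroup.closure {g₁, g₂, g₃}, g x = y) :=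
  stmt6_general d e₁ e₂ e₃ h12 h23 h3d hsum g₁ g₂ g₃ hg₁ hg₂ hg₃
end

section
/- Let p be a prime and let f(x) = Σ_{i=e}^{d} a_i x^i ∈ ℤ[x] be a polynomial of degree d ≥ 2 with a₀ = 0 (i.e., f(0) = 0), such that p ∤ a_d and p ∣ a_i for all i < d (good monomial reduction: f ≡ a_d x^d mod p). Let a ∈ ℚ with ν_p(a) = 1. Then for every n ≥ 1, the polynomial f^n(x) − a (where f^n is the n-fold composition of f with itself) is irreducible over ℚ; in particular, adjoining a root of f^n(x) − a to ℚ gives a field extension of degree d^n. -/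
open Polynomial


/-- Let `p` be a prime and `f ∈ ℤ[x]` of degree `d ≥ 2` with `f(0) = 0`,
`p ∤ a_d` and `p ∣ a_i` for all `i < d` (good monomial reduction: `f ≡ a_d x^d mod p`).
Let `a ∈ ℚ` with `ν_p(a) = 1`. Then for every `n ≥ 1` the polynomial `f^n(x) − a`
(where `f^n` is the `n`-fold composition of `f`) is irreducible over `ℚ`; in particular
adjoining a root gives a field extension of degree `d^n` (the polynomial has degree
`d^n`). -/
theorem stmt8 (p : ℕ) (hp : p.Prime) (f : Polynomial ℤ) (d : ℕ) (hd : 2 ≤ d)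
    (hdeg : f.natDegree = d) (h0 : f.coeff 0 = 0)
    (hlead : ¬ (p : ℤ) ∣ f.leadingCoeff) (hcoeffs : ∀ i < d, (p : ℤ) ∣ f.coeff i)
    (a : ℚ) (ha0 : a ≠ 0) (ha : padicValRat p a = 1) (n : ℕ) (hn : 1 ≤ n) :
    Irreducible ((((fun g => f.comp g)^[n] Polynomial.X).map (Int.castRingHom ℚ))
        - Polynomial.C a) ∧
    ((((fun g => f.comp g)^[n] Polynomial.X).map (Int.castRingHom ℚ))
        - Polynomial.C a).natDegree = d ^ n := by
  haveI : Fact p.Prime := ⟨hp⟩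
  have hpZ : Prime (p : ℤ) := Nat.prime_iff_prime_int.mp hp
  set F : ℤ[X] := (fun g => f.comp g)^[n] X with hF
  -- degree of iterate
  have hFdeg : ∀ m, ((fun g => f.comp g)^[m] X).natDegree = d ^ m := by
    intro m
    induction m with
    | zero => simp
    | succ m ih =>
      rw [Function.iterate_succ_apply', natDegree_comp, hdeg, ih, pow_succ, mul_comm]
  -- constant coefficient of iterate
  have hF0 : ∀ m, ((fun g => f.comp g)^[m] X).coeff 0 = 0 := by
    intro m
    induction m with
    | zero => simp
    | succ m ih =>
      rw [Function.iterate_succ_apply', coeff_zero_eq_eval_zero, eval_comp,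
        ← coeff_zero_eq_eval_zero, ih, ← coeff_zero_eq_eval_zero]
      exact h0
  -- leading coefficient of iterate
  have hFlead : ∀ m, ¬ (p : ℤ) ∣ ((fun g => f.comp g)^[m] X).leadingCoeff := by
    intro m
    induction m with
    | zero => simpa using hpZ.not_dvd_one
    | succ m ih =>
      rw [Function.iterate_succ_apply', leadingCoeff_comp (by
        rw [hFdeg]; positivity)]
      intro hdvd
      rcases hpZ.dvd_mul.mp hdvd with h | h
      · exact hlead h
      · exact ih (hpZ.dvd_of_dvd_pow h)
  -- reduction mod p
  let φ : ℤ →+* ZMod p := Int.castRingHom (ZMod p)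
  have hfmap : f.map φ = C (φ f.leadingCoeff) * X ^ d := by
    ext i
    rw [coeff_map, coeff_C_mul, coeff_X_pow]
    rcases lt_trichotomy i d with h | h | h
    · rw [if_neg h.ne, mul_zero]
      exact (ZMod.intCast_zmod_eq_zero_iff_dvd _ _).mpr (hcoeffs i h)
    · subst h
      rw [if_pos rfl, mul_one, leadingCoeff, hdeg]
    · rw [if_neg h.ne', mul_zero, coeff_eq_zero_of_natDegree_lt (hdeg ▸ h), map_zero]
  have hFmap : ∀ m, ∃ c : ZMod p,
      ((fun g => f.comp g)^[m] X).map φ = C c * X ^ (d ^ m) := by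
    intro m
    induction m with
    | zero => exact ⟨1, by simp⟩
    | succ m ih =>
      obtain ⟨c, hc⟩ := ih
      refine ⟨φ f.leadingCoeff * c ^ d, ?_⟩
      rw [Function.iterate_succ_apply', map_comp, hfmap, hc]
      simp only [mul_comp, C_comp, pow_comp, X_comp, mul_pow, ← C_pow, ← pow_mul, ← pow_succ]
      rw [← mul_assoc, ← C_mul]
  -- coefficients of F below the top are divisible by p
  have hFcoeffs : ∀ i < d ^ n, (p : ℤ) ∣ F.coeff i := by
    intro i hi
    obtain ⟨c, hc⟩ := hFmap n
    have h1 : (F.map φ).coeff i = 0 := by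
      rw [hF, hc, coeff_C_mul, coeff_X_pow, if_neg hi.ne, mul_zero]
    rw [coeff_map] at h1
    exact (ZMod.intCast_zmod_eq_zero_iff_dvd _ _).mp h1
  -- the rational number a: numerator and denominator facts
  have hnum0 : a.num ≠ 0 := Rat.num_ne_zero.mpr ha0
  have hnumdvd : (p : ℤ) ∣ a.num := by
    by_contra h
    rw [padicValRat_def, padicValInt.eq_zero_of_not_dvd h] at ha
    omega
  have hdennd : ¬ (p : ℤ) ∣ (a.den : ℤ) := by
    intro h
    have h1 : p ∣ a.num.natAbs := Int.natAbs_dvd_natAbs.mpr (Int.natAbs_dvd.mp (by simpa using hnumdvd))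
    have h2 : p ∣ a.den := Int.ofNat_dvd.mp (by simpa using h)
    exact hp.one_lt.ne' ((a.reduced.coprime_dvd_left h1).eq_one_of_dvd h2)
  have hvalnum : padicValInt p a.num = 1 := by
    rw [padicValRat_def, padicValNat.eq_zero_of_not_dvd (fun h => hdennd (Int.ofNat_dvd.mpr h))] at ha
    omega
  have hnum2 : ¬ (p : ℤ) ^ 2 ∣ a.num := by
    intro h
    rcases (padicValInt_dvd_iff 2 a.num).mp h with h' | h'
    · exact hnum0 h'
    · omega
  -- the integer polynomial H
  set H : ℤ[X] := C (a.den : ℤ) * F - C a.num with hH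
  have hden0 : (a.den : ℤ) ≠ 0 := Int.ofNat_ne_zero.mpr a.den_nz
  -- coefficients of H
  have hHcoeff : ∀ i, H.coeff i = (a.den : ℤ) * F.coeff i - (if i = 0 then a.num else 0) := by
    intro i
    rw [hH, coeff_sub, coeff_C_mul, coeff_C]
  have hHtop : H.coeff (d ^ n) = (a.den : ℤ) * F.leadingCoeff := by
    rw [hHcoeff, if_neg (by positivity : 0 < d ^ n).ne', sub_zero, leadingCoeff, hFdeg, hF]
  have hHtopnd : ¬ (p : ℤ) ∣ H.coeff (d ^ n) := by
    rw [hHtop]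
    intro h
    rcases hpZ.dvd_mul.mp h with h | h
    · exact hdennd h
    · exact hFlead n h
  have hHtop0 : H.coeff (d ^ n) ≠ 0 := fun h => hHtopnd (h ▸ dvd_zero _)
  have hHne : H ≠ 0 := fun h => hHtop0 (by rw [h, coeff_zero])
  have hHdeg : H.natDegree = d ^ n := by
    rw [hH, natDegree_sub_C, natDegree_C_mul hden0, hFdeg]
  set c0 := H.content with hc0
  set P := H.primPart with hP
  have hHeq : H = C c0 * P := H.eq_C_content_mul_primPart
  have hcontnd : ¬ (p : ℤ) ∣ c0 := fun h => hHtopnd (h.trans (content_dvd_coeff _))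
  have hcoeffPR : ∀ i, H.coeff i = c0 * P.coeff i := by
    intro i
    conv_lhs => rw [hHeq]
    rw [coeff_C_mul]
  have hPdeg : P.natDegree = d ^ n := by rw [hP, natDegree_primPart, hHdeg]
  have hdn0 : 0 < d ^ n := by positivity
  -- divisibility of the lower coefficients of H
  have hHlow : ∀ i < d ^ n, (p : ℤ) ∣ H.coeff i := by
    intro i hi
    rw [hHcoeff]
    refine dvd_sub ((hFcoeffs i hi).mul_left _) ?_
    split_ifs
    · exact hnumdvd
    · exact dvd_zero _
  -- Eisenstein criterion
  have hEis : P.IsEisensteinAt (Ideal.span {(p : ℤ)}) := by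
    refine ⟨?_, ?_, ?_⟩
    · rw [Ideal.mem_span_singleton, leadingCoeff, hPdeg]
      intro h
      exact hHtopnd (hcoeffPR (d ^ n) ▸ h.mul_left c0)
    · intro i hi
      rw [Ideal.mem_span_singleton]
      have h1 : (p : ℤ) ∣ c0 * P.coeff i := hcoeffPR i ▸ hHlow i (hPdeg ▸ hi)
      rcases hpZ.dvd_mul.mp h1 with h | h
      · exact absurd h hcontnd
      · exact h
    · rw [Ideal.span_singleton_pow, Ideal.mem_span_singleton]
      intro h
      have h1 : c0 * P.coeff 0 = -a.num := by
        rw [← hcoeffPR, hHcoeff, if_pos rfl, hF, hF0 n, mul_zero, zero_sub]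
      exact hnum2 (by
        have := (h.mul_left c0)
        rw [h1] at this
        exact (dvd_neg.mp this))
  have hspan : (Ideal.span {(p : ℤ)}).IsPrime :=
    (Ideal.span_singleton_prime (by exact_mod_cast hp.ne_zero)).mpr hpZ
  have hIrrP : Irreducible P :=
    hEis.irreducible hspan (isPrimitive_primPart H) (hPdeg ▸ hdn0)
  have hIrrQ : Irreducible (P.map (Int.castRingHom ℚ)) :=
    (Polynomial.IsPrimitive.Int.irreducible_iff_irreducible_map_cast (isPrimitive_primPart H)).mp hIrrP
  -- degree of the target polynomial
  have hGdeg : ((F.map (Int.castRingHom ℚ)) - C a).natDegree = d ^ n := by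
    rw [natDegree_sub_C, natDegree_map_eq_of_injective Int.cast_injective, hF, hFdeg]
  -- relate H.map to the target polynomial
  have hda : (a.den : ℚ) * a = (a.num : ℚ) := by
    rw [mul_comm, Rat.mul_den_eq_num]
  have hmapH : H.map (Int.castRingHom ℚ) = C ((a.den : ℚ)) * (F.map (Int.castRingHom ℚ) - C a) := by
    rw [hH, Polynomial.map_sub, Polynomial.map_mul, map_C, map_C, mul_sub, ← C_mul, hda]
    simp only [eq_intCast, Int.cast_natCast]
  have hdenQ : ((a.den : ℚ)) ≠ 0 := Nat.cast_ne_zero.mpr a.den_nz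
  have hc0ne : ((c0 : ℚ)) ≠ 0 :=
    Int.cast_ne_zero.mpr (fun h => hHne (content_eq_zero_iff.mp h))
  refine ⟨?_, hGdeg⟩
  rw [← irreducible_isUnit_mul (isUnit_C.mpr (isUnit_iff_ne_zero.mpr hdenQ)), ← hmapH,
    hHeq, Polynomial.map_mul, map_C,
    irreducible_isUnit_mul (isUnit_C.mpr (isUnit_iff_ne_zero.mpr (by
      simpa using hc0ne)))]
  exact hIrrQ
end

section
/- Let d ≥ 2 and for 0 ≤ i ≤ d let Nᵢ be the number of permutations τ ∈ S_d with |supp(τ)| = i (points moved by τ), so that Σᵢ Nᵢ = d!. Define φ : [0,1] → [0,1] by φ(x) = (1/d!)·Σ_{i=0}^{d} Nᵢ·(1 − (1−x)^{d−i}). Then φ(0) = 0, φ is monotonically increasing on [0,1], and φ(x) < x for all x ∈ (0,1]; in particular, the unique fixed point of φ in [0,1] is 0. -/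
/-!
Grouping permutations by support size, `φ x = (1/d!) ∑_τ (1 - (1 - x) ^ fix τ)`, where
`fix τ = d - |supp τ|`. By Bernoulli's inequality each summand is at most `fix τ · x`, strictly
so for the identity since `fix 1 = d ≥ 2`, and by Burnside's lemma `∑_τ fix τ = d!`, so `φ x < x`.
-/

open Finset

namespace Equiv.Perm

variable {α : Type*} [Fintype α] [DecidableEq α]

theorem card_fixedBy_eq_card_sub_card_support (τ : Perm α) [Fintype (MulAction.fixedBy α τ)] :
    Fintype.card (MulAction.fixedBy α τ) = Fintype.card α - #τ.support := by
  rw [← card_compl, ← Fintype.card_coe]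
  exact Fintype.card_congr (Equiv.setCongr (by ext; simp [MulAction.mem_fixedBy]))

-- Burnside's lemma, the action of `Perm α` on `α` having a single orbit.
theorem sum_card_sub_card_support [Nonempty α] :
    ∑ τ : Perm α, (Fintype.card α - #τ.support) = (Fintype.card α).factorial := by
  classical
  have : Subsingleton (MulAction.orbitRel.Quotient (Perm α) α) :=
    (MulAction.pretransitive_iff_subsingleton_quotient _ _).mp inferInstance
  simp_rw [← card_fixedBy_eq_card_sub_card_support]
  have hΩ : Fintype.card (MulAction.orbitRel.Quotient (Perm α) α) = 1 :=
    Fintype.card_eq_one_iff.mpr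
      ⟨Quotient.mk'' (Classical.arbitrary α), fun _ => Subsingleton.elim _ _⟩
  rw [MulAction.sum_card_fixedBy_eq_card_orbits_mul_card_group, hΩ, one_mul, Fintype.card_perm]

theorem sum_card_filter_card_support_smul {M : Type*} [AddCommMonoid M] (f : ℕ → M) :
    ∑ i ∈ range (Fintype.card α + 1), #{τ : Perm α | #τ.support = i} • f i =
      ∑ τ : Perm α, f #τ.support := by
  rw [← sum_fiberwise_of_maps_to (g := fun τ : Perm α => #τ.support)
    (t := range (Fintype.card α + 1)) (fun τ _ => mem_range_succ_iff.mpr (card_le_univ _))]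
  refine sum_congr rfl fun i _ => ?_
  rw [sum_congr rfl fun τ hτ => congrArg f (mem_filter.mp hτ).2, sum_const]

end Equiv.Perm

theorem one_sub_one_sub_pow_le_mul {R : Type*} [Ring R] [LinearOrder R] [IsStrictOrderedRing R]
    {x : R} (hx : x ≤ 2) (n : ℕ) : 1 - (1 - x) ^ n ≤ n * x := by
  have := one_add_mul_le_pow (neg_le_neg hx) n
  rw [mul_neg, ← sub_eq_add_neg, ← sub_eq_add_neg] at this
  exact sub_le_comm.mp this

theorem Real.one_sub_one_sub_pow_lt_mul {x : ℝ} (hx₀ : x ≠ 0) (hx₁ : x ≤ 1) {n : ℕ} (hn : 2 ≤ n) :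
    1 - (1 - x) ^ n < n * x := by
  have := one_add_mul_self_lt_rpow_one_add (neg_le_neg hx₁) (neg_ne_zero.mpr hx₀)
    (p := n) (by exact_mod_cast hn)
  rw [Real.rpow_natCast, mul_neg, ← sub_eq_add_neg, ← sub_eq_add_neg] at this
  linarith

theorem sum_one_sub_one_sub_pow_lt {ι : Type*} {s : Finset ι} (k : ι → ℕ) {x : ℝ} (hx₀ : 0 < x)
    (hx₁ : x ≤ 1) {j : ι} (hj : j ∈ s) (hkj : 2 ≤ k j) :
    ∑ i ∈ s, (1 - (1 - x) ^ k i) < (∑ i ∈ s, k i : ℕ) * x := by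
  rw [Nat.cast_sum, sum_mul]
  exact sum_lt_sum (fun i _ => one_sub_one_sub_pow_le_mul (by linarith) _)
    ⟨j, hj, Real.one_sub_one_sub_pow_lt_mul hx₀.ne' hx₁ hkj⟩

/-- Let `d ≥ 2` and let `Nᵢ` be the number of permutations `τ ∈ S_d` moving
exactly `i` points. Define `φ(x) = (1/d!)·∑_{i=0}^{d} Nᵢ·(1 − (1−x)^{d−i})`. Then
`φ(0) = 0`, `φ` is monotonically increasing on `[0,1]`, and `φ(x) < x` for all
`x ∈ (0,1]`; in particular the unique fixed point of `φ` in `[0,1]` is `0`. -/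
theorem stmt12 (d : ℕ) (hd : 2 ≤ d)
    (N : ℕ → ℕ)
    (hN : ∀ i, N i =
      (Finset.univ.filter (fun τ : Equiv.Perm (Fin d) => τ.support.card = i)).card)
    (φ : ℝ → ℝ)
    (hφ : ∀ x : ℝ, φ x = (1 / (d.factorial : ℝ)) *
      ∑ i ∈ Finset.range (d + 1), (N i : ℝ) * (1 - (1 - x) ^ (d - i))) :
    φ 0 = 0 ∧ MonotoneOn φ (Set.Icc 0 1) ∧
    (∀ x ∈ Set.Ioc (0 : ℝ) 1, φ x < x) ∧
    (∀ x ∈ Set.Icc (0 : ℝ) 1, φ x = x → x = 0) := by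
  have hφ_perm (x : ℝ) :
      φ x = (d.factorial : ℝ)⁻¹ * ∑ τ : Equiv.Perm (Fin d), (1 - (1 - x) ^ (d - #τ.support)) := by
    have := Equiv.Perm.sum_card_filter_card_support_smul (α := Fin d) fun i => 1 - (1 - x) ^ (d - i)
    simp only [Fintype.card_fin, nsmul_eq_mul, ← hN] at this
    rw [hφ, one_div, this]
  have hfix : ∑ τ : Equiv.Perm (Fin d), (d - #τ.support) = d.factorial := by
    have : Nonempty (Fin d) := ⟨⟨0, by omega⟩⟩
    simpa using Equiv.Perm.sum_card_sub_card_support (α := Fin d)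
  have hlt : ∀ x ∈ Set.Ioc (0 : ℝ) 1, φ x < x := by
    rintro x ⟨hx₀, hx₁⟩
    have := sum_one_sub_one_sub_pow_lt (s := univ) (fun τ : Equiv.Perm (Fin d) => d - #τ.support)
      hx₀ hx₁ (mem_univ 1) (by simpa using hd)
    rwa [hφ_perm, inv_mul_lt_iff₀ (by positivity), ← hfix]
  refine ⟨by simp [hφ_perm], fun x _ y hy hxy => ?_, hlt, fun x hx hx_eq => ?_⟩
  · rw [hφ_perm, hφ_perm]
    gcongr
    linarith [hy.2]
  · by_contra hx₀
    exact (hlt x ⟨lt_of_le_of_ne hx.1 (Ne.symm hx₀), hx.2⟩).ne hx_eq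
end

section
/- Let q be a prime and let g(x) = x^{e}·g₁(x), h(x) ∈ ℤ[x] with deg g = d, deg h < e, where the leading coefficient of g₁ and the constant coefficient of h are q-adic units, all coefficients have nonnegative q-adic valuation, and g₁(0), h(0) are q-adic units. Let a ∈ ℚ with ν_q(a) > 0. Then the q-adic Newton polygon of g(x) − a·h(x) has exactly two slopes: slope 0 with multiplicity d − e and slope −ν_q(a)/e with multiplicity e. In particular, g(x) − a·h(x) has exactly e roots (counted with multiplicity) of positive valuation in an algebraic closure of ℚ_q. -/
/-!
Write `P = X ^ e * G₁ - α * H`. All its coefficients are integral, its leading coefficient is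
that of `G₁`, a unit, and its constant coefficient `-α H(0)` has valuation `v α > 0`. A root
with negative valuation is impossible, since the leading term of `P` would dominate. At a root
`z` with `v z > 0`, `G₁(z)` and `H(z)` are units, so `z ^ e G₁(z) = α H(z)` forces
`e • v z = v α`. Hence every root has valuation `0` or `v α / e`, and since the valuations of
the roots add up to `v (P 0) - v (lc P) = v α`, exactly `e` of them have the positive one.
-/

open Polynomial

theorem WithTop.nsmul_eq_coe_iff_eq_coe_div {K : Type*} [Field K] [CharZero K] {e : ℕ}
    (he : e ≠ 0) {x : WithTop K} {t : K} : e • x = t ↔ x = ((t / e : K) : WithTop K) := by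
  induction x with
  | top =>
    obtain ⟨k, rfl⟩ := Nat.exists_eq_succ_of_ne_zero he
    simp [succ_nsmul]
  | coe r =>
    rw [← WithTop.coe_nsmul, WithTop.coe_inj, WithTop.coe_inj, nsmul_eq_mul,
      eq_div_iff (Nat.cast_ne_zero.mpr he), mul_comm, eq_comm]

theorem Multiset.card_filter_eq_of_sum_map_eq {ι K : Type*} [Field K] [CharZero K]
    [DecidableEq K] {s : Multiset ι} {f : ι → WithTop K} {t : K} {e : ℕ} (ht : t ≠ 0)
    (hf : ∀ x ∈ s, f x = 0 ∨ f x = ((t / e : K) : WithTop K)) (hsum : (s.map f).sum = t) :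
    card (s.filter (f · = ((t / e : K) : WithTop K))) = e ∧
      card (s.filter (f · = 0)) = card s - e := by
  set c : K := t / e with hc
  have hsum' : card (s.filter (f · = c)) • (c : WithTop K) = t := by
    rw [← hsum, ← Multiset.map_id (s.map f), Multiset.sum_map_eq_nsmul_single (c : WithTop K),
      Multiset.count_map]
    · simp only [id, eq_comm]
    · intro y hy hys
      obtain ⟨x, hx, rfl⟩ := Multiset.mem_map.mp hys
      exact (hf x hx).resolve_right hy
  rw [← WithTop.coe_nsmul, WithTop.coe_inj, nsmul_eq_mul] at hsum'
  have he : (e : K) ≠ 0 := fun he0 => ht (by simpa [hc, he0] using hsum'.symm)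
  have hcard : card (s.filter (f · = c)) = e := by
    rw [hc, mul_div_assoc', div_eq_iff he, mul_comm] at hsum'
    exact_mod_cast mul_left_cancel₀ ht hsum'
  refine ⟨hcard, ?_⟩
  have hc0 : (c : WithTop K) ≠ 0 := WithTop.coe_ne_zero.mpr (div_ne_zero ht he)
  have hsplit : s.filter (f · = 0) + s.filter (f · = c) = s := by
    conv_rhs => rw [← Multiset.filter_add_not (f · = 0) s]
    congr 1
    refine Multiset.filter_congr fun x hx => ?_
    rcases hf x hx with h | h <;> simp [h, hc0, hc0.symm]
  have hcard_split := congrArg card hsplit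
  rw [Multiset.card_add] at hcard_split
  omega

namespace AddValuation

section Polynomial

variable {R Γ₀ : Type*} [CommRing R] [LinearOrderedAddCommMonoidWithTop Γ₀]
  (v : AddValuation R Γ₀)

theorem map_multiset_prod (s : Multiset R) : v s.prod = (s.map v).sum := by
  induction s using Multiset.induction with
  | empty => simp
  | cons x s ih => simp [v.map_mul, ih]

theorem le_map_eval {F : R[X]} {z : R} {g : Γ₀}
    (h : ∀ i ≤ F.natDegree, g ≤ v (F.coeff i) + i • v z) : g ≤ v (F.eval z) := by
  rw [eval_eq_sum_range]
  refine v.map_le_sum fun i hi => ?_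
  rw [v.map_mul, v.map_pow]
  exact h i (Nat.lt_succ_iff.mp (Finset.mem_range.mp hi))

variable {F : R[X]} {z : R}

theorem map_eval_nonneg (hF : ∀ i, 0 ≤ v (F.coeff i)) (hz : 0 ≤ v z) : 0 ≤ v (F.eval z) :=
  v.le_map_eval fun i _ => add_nonneg (hF i) (nsmul_nonneg hz i)

theorem natDegree_nsmul_le_map_eval (hF : ∀ i, 0 ≤ v (F.coeff i)) (hz : v z ≤ 0) :
    F.natDegree • v z ≤ v (F.eval z) :=
  v.le_map_eval fun i hi => le_add_of_nonneg_of_le (hF i) (nsmul_le_nsmul_left_of_nonpos hz hi)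

theorem map_eval_eq_zero_of_map_coeff_zero (hF : ∀ i, 0 ≤ v (F.coeff i))
    (h0 : v (F.coeff 0) = 0) (hz : 0 < v z) : v (F.eval z) = 0 := by
  have hdivX : 0 < v (z * F.divX.eval z) := by
    rw [v.map_mul]
    have hdivX_coeff (i : ℕ) : 0 ≤ v (F.divX.coeff i) := by simpa [coeff_divX] using hF (i + 1)
    exact add_pos_of_pos_of_nonneg hz (v.map_eval_nonneg hdivX_coeff hz.le)
  conv_lhs => rw [← X_mul_divX_add F]
  simp only [eval_add, eval_mul, eval_X, eval_C]
  rw [v.map_add_eq_of_lt_right (h0 ▸ hdivX), h0]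

theorem map_eval_eq_natDegree_nsmul {Γ : Type*} [AddCommGroup Γ] [LinearOrder Γ]
    [IsOrderedAddMonoid Γ] (v : AddValuation R (WithTop Γ)) {F : R[X]} {z : R}
    (hF : ∀ i, 0 ≤ v (F.coeff i)) (hlead : v F.leadingCoeff = 0) (hz : v z < 0) :
    v (F.eval z) = F.natDegree • v z := by
  obtain ⟨γ, hγ⟩ := WithTop.ne_top_iff_exists.mp (hz.trans (WithTop.coe_lt_top 0)).ne
  have hγ0 : γ < 0 := by rw [← hγ] at hz; exact_mod_cast hz
  have hlt : F.natDegree • v z < v (F.eraseLead.eval z) := by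
    rcases F.eraseLead_natDegree_lt_or_eraseLead_eq_zero with hdeg | h0
    · have hE : ∀ i, 0 ≤ v (F.eraseLead.coeff i) := fun i => by
        rw [eraseLead_coeff]; split_ifs <;> simp [hF]
      refine lt_of_lt_of_le ?_ (v.natDegree_nsmul_le_map_eval hE hz.le)
      rw [← hγ, ← WithTop.coe_nsmul, ← WithTop.coe_nsmul, WithTop.coe_lt_coe]
      simpa using nsmul_lt_nsmul_left (neg_pos.mpr hγ0) hdeg
    · rw [h0, eval_zero, v.map_zero, ← hγ, ← WithTop.coe_nsmul]
      exact WithTop.coe_lt_top _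
  have hlead' : v (F.leadingCoeff * z ^ F.natDegree) = F.natDegree • v z := by
    rw [v.map_mul, v.map_pow, hlead, zero_add]
  conv_lhs => rw [← F.eraseLead_add_C_mul_X_pow]
  rw [eval_add, eval_mul, eval_C, eval_pow, eval_X, v.map_add_eq_of_lt_right (hlead' ▸ hlt),
    hlead']

theorem map_coeff_zero_eq_add_sum_roots [IsDomain R] {P : R[X]} (hP : P.Splits) :
    v (P.coeff 0) = v P.leadingCoeff + (P.roots.map v).sum := by
  rw [hP.coeff_zero_eq_leadingCoeff_mul_prod_roots, v.map_mul, v.map_mul, v.map_pow, v.map_neg,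
    v.map_one, nsmul_zero, zero_add, map_multiset_prod]

end Polynomial

end AddValuation

section TwoSlopes

variable {R : Type*} [CommRing R] {G₁ H : R[X]} {α : R} {e : ℕ}

theorem natDegree_C_mul_lt_natDegree_X_pow_mul (hG₁ : G₁ ≠ 0) (hH : H.natDegree < e) :
    (C α * H).natDegree < (X ^ e * G₁).natDegree := by
  have : Nontrivial R := Polynomial.nontrivial_iff.mp (nontrivial_of_ne G₁ 0 hG₁)
  rw [natDegree_X_pow_mul e hG₁]
  exact (natDegree_C_mul_le α H).trans_lt (hH.trans_le (Nat.le_add_left e _))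

theorem natDegree_X_pow_mul_sub_C_mul (hG₁ : G₁ ≠ 0) (hH : H.natDegree < e) :
    (X ^ e * G₁ - C α * H).natDegree = G₁.natDegree + e := by
  have : Nontrivial R := Polynomial.nontrivial_iff.mp (nontrivial_of_ne G₁ 0 hG₁)
  rw [natDegree_sub_eq_left_of_natDegree_lt (natDegree_C_mul_lt_natDegree_X_pow_mul hG₁ hH),
    natDegree_X_pow_mul e hG₁]

theorem leadingCoeff_X_pow_mul_sub_C_mul (hG₁ : G₁ ≠ 0) (hH : H.natDegree < e) :
    (X ^ e * G₁ - C α * H).leadingCoeff = G₁.leadingCoeff := by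
  rw [leadingCoeff_sub_of_degree_lt
    (degree_lt_degree (natDegree_C_mul_lt_natDegree_X_pow_mul hG₁ hH)),
    leadingCoeff_monic_mul (monic_X_pow e)]

theorem coeff_zero_X_pow_mul_sub_C_mul (he : e ≠ 0) :
    (X ^ e * G₁ - C α * H).coeff 0 = -(α * H.coeff 0) := by
  simp [he.symm]

theorem AddValuation.map_coeff_X_pow_mul_sub_C_mul_nonneg {Γ₀ : Type*}
    [LinearOrderedAddCommMonoidWithTop Γ₀] (v : AddValuation R Γ₀)
    (hG : ∀ i, 0 ≤ v (G₁.coeff i)) (hH : ∀ i, 0 ≤ v (H.coeff i)) (hα : 0 ≤ v α) (i : ℕ) :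
    0 ≤ v ((X ^ e * G₁ - C α * H).coeff i) := by
  rw [coeff_sub]
  refine le_trans (le_min ?_ ?_) (v.map_sub _ _)
  · rw [coeff_X_pow_mul']
    split_ifs
    · exact hG _
    · simp
  · rw [coeff_C_mul, v.map_mul]
    exact add_nonneg hα (hH i)

variable {Γ : Type*} [AddCommGroup Γ] [LinearOrder Γ] [IsOrderedAddMonoid Γ]
  (v : AddValuation R (WithTop Γ))

theorem AddValuation.map_eq_zero_or_nsmul_eq_of_isRoot_X_pow_mul_sub_C_mul
    (hG : ∀ i, 0 ≤ v (G₁.coeff i)) (hH : ∀ i, 0 ≤ v (H.coeff i))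
    (hGlead : v G₁.leadingCoeff = 0) (hG0 : v (G₁.coeff 0) = 0) (hH0 : v (H.coeff 0) = 0)
    (hHe : H.natDegree < e) (hα : 0 < v α) {z : R} (hz : (X ^ e * G₁ - C α * H).IsRoot z) :
    v z = 0 ∨ e • v z = v α := by
  have hG₁ : G₁ ≠ 0 := by rintro rfl; simp at hGlead
  rcases lt_trichotomy (v z) 0 with hneg | hzero | hpos
  · have hP := v.map_eval_eq_natDegree_nsmul
      (v.map_coeff_X_pow_mul_sub_C_mul_nonneg hG hH hα.le)
      (by rwa [leadingCoeff_X_pow_mul_sub_C_mul hG₁ hHe]) hneg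
    rw [hz.eq_zero, v.map_zero] at hP
    exact absurd hP ((nsmul_nonpos hneg.le _).trans_lt (WithTop.coe_lt_top 0)).ne'
  · exact Or.inl hzero
  · right
    have hroot : z ^ e * G₁.eval z = α * H.eval z := by
      simpa [sub_eq_zero] using hz.eq_zero
    simpa [v.map_mul, v.map_pow, v.map_eval_eq_zero_of_map_coeff_zero hG hG0 hpos,
      v.map_eval_eq_zero_of_map_coeff_zero hH hH0 hpos] using congrArg v hroot

theorem AddValuation.sum_map_roots_X_pow_mul_sub_C_mul [IsDomain R]
    (hGlead : v G₁.leadingCoeff = 0) (hH0 : v (H.coeff 0) = 0) (hHe : H.natDegree < e)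
    (hP : (X ^ e * G₁ - C α * H).Splits) :
    ((X ^ e * G₁ - C α * H).roots.map v).sum = v α := by
  have hG₁ : G₁ ≠ 0 := by rintro rfl; simp at hGlead
  have h := v.map_coeff_zero_eq_add_sum_roots hP
  rwa [coeff_zero_X_pow_mul_sub_C_mul (Nat.ne_zero_of_lt hHe), v.map_neg, v.map_mul, hH0,
    add_zero, leadingCoeff_X_pow_mul_sub_C_mul hG₁ hHe, hGlead, zero_add, eq_comm] at h

end TwoSlopes

theorem AddValuation.roots_X_pow_mul_sub_C_mul {F K : Type*} [Field F] [IsAlgClosed F]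
    [Field K] [LinearOrder K] [IsStrictOrderedRing K] [DecidableEq K]
    (v : AddValuation F (WithTop K))
    {G₁ H : F[X]} {α : F} {e : ℕ} {t : K}
    (hG : ∀ i, 0 ≤ v (G₁.coeff i)) (hH : ∀ i, 0 ≤ v (H.coeff i))
    (hGlead : v G₁.leadingCoeff = 0) (hG0 : v (G₁.coeff 0) = 0) (hH0 : v (H.coeff 0) = 0)
    (hHe : H.natDegree < e) (hα : v α = t) (ht : 0 < t) :
    Multiset.card (X ^ e * G₁ - C α * H).roots = G₁.natDegree + e ∧
      (∀ z ∈ (X ^ e * G₁ - C α * H).roots, v z = 0 ∨ v z = ((t / e : K) : WithTop K)) ∧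
      Multiset.card ((X ^ e * G₁ - C α * H).roots.filter (v · = 0)) = G₁.natDegree ∧
      Multiset.card ((X ^ e * G₁ - C α * H).roots.filter (v · = ((t / e : K) : WithTop K))) =
        e := by
  have hcard : Multiset.card (X ^ e * G₁ - C α * H).roots = G₁.natDegree + e := by
    rw [splits_iff_card_roots.mp (IsAlgClosed.splits _),
      natDegree_X_pow_mul_sub_C_mul (fun h => by simp [h] at hGlead) hHe]
  have hroots (z) (hz : z ∈ (X ^ e * G₁ - C α * H).roots) :
      v z = 0 ∨ v z = ((t / e : K) : WithTop K) :=
    (v.map_eq_zero_or_nsmul_eq_of_isRoot_X_pow_mul_sub_C_mul hG hH hGlead hG0 hH0 hHe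
      (hα ▸ WithTop.coe_pos.mpr ht) (isRoot_of_mem_roots hz)).imp_right fun h =>
        (WithTop.nsmul_eq_coe_iff_eq_coe_div (Nat.ne_zero_of_lt hHe)).mp (h.trans hα)
  obtain ⟨hcard₁, hcard₀⟩ := Multiset.card_filter_eq_of_sum_map_eq ht.ne' hroots
    (hα ▸ v.sum_map_roots_X_pow_mul_sub_C_mul hGlead hH0 hHe (IsAlgClosed.splits _))
  exact ⟨hcard, hroots, by omega, hcard₁⟩

section PadicExtension

variable {L : Type*} [Field L] {v : AddValuation L (WithTop ℚ)} {q : ℕ}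

theorem map_intCast_nonneg_of_padicValInt
    (hv : ∀ n : ℤ, n ≠ 0 → v ((n : ℤ) : L) = ((padicValInt q n : ℚ) : WithTop ℚ)) (n : ℤ) :
    0 ≤ v (n : L) := by
  rcases eq_or_ne n 0 with rfl | hn
  · simp
  · rw [hv n hn]
    exact WithTop.coe_nonneg.mpr (Nat.cast_nonneg _)

theorem map_intCast_eq_zero_of_not_dvd
    (hv : ∀ n : ℤ, n ≠ 0 → v ((n : ℤ) : L) = ((padicValInt q n : ℚ) : WithTop ℚ)) {n : ℤ}
    (h : ¬ (q : ℤ) ∣ n) : v (n : L) = 0 := by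
  rw [hv n (by rintro rfl; exact h (dvd_zero _)), padicValInt.eq_zero_of_not_dvd h]
  rfl

theorem map_ratCast_eq_padicValRat
    (hv : ∀ n : ℤ, n ≠ 0 → v ((n : ℤ) : L) = ((padicValInt q n : ℚ) : WithTop ℚ)) {a : ℚ}
    (ha : a ≠ 0) : v (a : L) = ((padicValRat q a : ℚ) : WithTop ℚ) := by
  have hnum := hv a.num (Rat.num_ne_zero.mpr ha)
  have hden := hv a.den (Nat.cast_ne_zero.mpr a.den_nz)
  have hden0 : (a.den : L) ≠ 0 := fun h0 => by simp [h0] at hden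
  rw [show (a.num : L) = a * ((a.den : ℤ) : L) by
    rw [Int.cast_natCast, Rat.cast_def, div_mul_cancel₀ _ hden0], v.map_mul, hden] at hnum
  obtain ⟨r, hr⟩ := WithTop.ne_top_iff_exists.mp fun h : v (a : L) = ⊤ => by simp [h] at hnum
  rw [← hr, ← WithTop.coe_add, WithTop.coe_inj, padicValInt.of_nat] at hnum
  rw [← hr, WithTop.coe_inj, padicValRat_def, Int.cast_sub, Int.cast_natCast, Int.cast_natCast]
  linarith

end PadicExtension

open scoped Classical in
theorem stmt16_general (q : ℕ) (e d : ℕ)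
    (g₁ hp : Polynomial ℤ) (g : Polynomial ℤ) (hg : g = Polynomial.X ^ e * g₁)
    (hd : g.natDegree = d) (hhe : hp.natDegree < e)
    (hg₁lead : ¬ (q : ℤ) ∣ g₁.leadingCoeff) (hh0 : ¬ (q : ℤ) ∣ hp.coeff 0)
    (hg₁0 : ¬ (q : ℤ) ∣ g₁.coeff 0)
    (a : ℚ) (ha : 0 < padicValRat q a)
    (L : Type) [Field L] [IsAlgClosed L]
    (v : AddValuation L (WithTop ℚ))
    (hv : ∀ n : ℤ, n ≠ 0 → v ((n : ℤ) : L) = ((padicValInt q n : ℚ) : WithTop ℚ))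
    (P : Polynomial L)
    (hP : P = g.map (Int.castRingHom L) - Polynomial.C (a : L) * hp.map (Int.castRingHom L)) :
    Multiset.card P.roots = d ∧
    (∀ z ∈ P.roots, v z = (0 : WithTop ℚ) ∨
        v z = (((padicValRat q a : ℚ) / (e : ℚ) : ℚ) : WithTop ℚ)) ∧
    Multiset.card (P.roots.filter (fun z => v z = (0 : WithTop ℚ))) = d - e ∧
    Multiset.card (P.roots.filter
        (fun z => v z = (((padicValRat q a : ℚ) / (e : ℚ) : ℚ) : WithTop ℚ))) = e := by
  set ι := Int.castRingHom L
  have hcoeff (F : ℤ[X]) (i : ℕ) : 0 ≤ v ((F.map ι).coeff i) := by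
    rw [coeff_map]; exact map_intCast_nonneg_of_padicValInt hv _
  have hlc : v (ι g₁.leadingCoeff) = 0 := map_intCast_eq_zero_of_not_dvd hv hg₁lead
  have hlc0 : ι g₁.leadingCoeff ≠ 0 := fun h => by simp [h] at hlc
  have hg₁ : g₁ ≠ 0 := by rintro rfl; simp at hlc0
  have hd' : d = (g₁.map ι).natDegree + e := by
    rw [natDegree_map_of_leadingCoeff_ne_zero ι hlc0, ← hd, hg, natDegree_X_pow_mul e hg₁]
  rw [hg, Polynomial.map_mul, Polynomial.map_pow, map_X] at hP
  subst hP hd'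
  obtain ⟨hcard, hroots, hcard₀, hcard₁⟩ := v.roots_X_pow_mul_sub_C_mul (hcoeff g₁) (hcoeff hp)
    (by rwa [leadingCoeff_map_of_leadingCoeff_ne_zero ι hlc0])
    (by rw [coeff_map]; exact map_intCast_eq_zero_of_not_dvd hv hg₁0)
    (by rw [coeff_map]; exact map_intCast_eq_zero_of_not_dvd hv hh0)
    (natDegree_map_le.trans_lt hhe)
    (map_ratCast_eq_padicValRat (a := a) hv (by rintro rfl; simp at ha)) (by exact_mod_cast ha)
  exact ⟨hcard, hroots, by omega, hcard₁⟩

open scoped Classical in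
/-- Let `q` be a prime, `g(x) = x^e·g₁(x)` and `h(x)` in `ℤ[x]` with
`deg g = d`, `deg h < e`, where the leading coefficient of `g₁` and the constant
coefficients `g₁(0)`, `h(0)` are `q`-adic units (all coefficients, being integers, have
nonnegative `q`-adic valuation). Let `a ∈ ℚ` with `ν_q(a) > 0`. Then, in an
algebraically closed field `L` equipped with an additive valuation `v` extending the
`q`-adic valuation of `ℚ` (normalized by `v(q) = 1`), the polynomial `g(x) − a·h(x)` has
exactly `d` roots (with multiplicity), each root has valuation `0` or `ν_q(a)/e`,
exactly `d − e` roots have valuation `0`, and exactly `e` roots have the positive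
valuation `ν_q(a)/e` — i.e. the `q`-adic Newton polygon has exactly the two slopes `0`
(multiplicity `d − e`) and `−ν_q(a)/e` (multiplicity `e`). -/
theorem stmt16 (q : ℕ) (hq : q.Prime) (e d : ℕ) (he : 0 < e)
    (g₁ hp : Polynomial ℤ) (g : Polynomial ℤ) (hg : g = Polynomial.X ^ e * g₁)
    (hd : g.natDegree = d) (hhe : hp.natDegree < e)
    (hg₁lead : ¬ (q : ℤ) ∣ g₁.leadingCoeff) (hh0 : ¬ (q : ℤ) ∣ hp.coeff 0)
    (hg₁0 : ¬ (q : ℤ) ∣ g₁.coeff 0)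
    (a : ℚ) (ha0 : a ≠ 0) (ha : 0 < padicValRat q a)
    (L : Type) [Field L] [IsAlgClosed L] [CharZero L]
    (v : AddValuation L (WithTop ℚ))
    (hv : ∀ n : ℤ, n ≠ 0 → v ((n : ℤ) : L) = ((padicValInt q n : ℚ) : WithTop ℚ))
    (P : Polynomial L)
    (hP : P = g.map (Int.castRingHom L) - Polynomial.C (a : L) * hp.map (Int.castRingHom L)) :
    Multiset.card P.roots = d ∧
    (∀ z ∈ P.roots, v z = (0 : WithTop ℚ) ∨
        v z = (((padicValRat q a : ℚ) / (e : ℚ) : ℚ) : WithTop ℚ)) ∧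
    Multiset.card (P.roots.filter (fun z => v z = (0 : WithTop ℚ))) = d - e ∧
    Multiset.card (P.roots.filter
        (fun z => v z = (((padicValRat q a : ℚ) / (e : ℚ) : ℚ) : WithTop ℚ))) = e :=
  stmt16_general q e d g₁ hp g hg hd hhe hg₁lead hh0 hg₁0 a ha L v hv P hP
end
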